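/- arXiv:2308.01039 — 2 statements merged into one kernel-verified Lean document; each statement's English description precedes it below -/
import Mathlib

section
/- Special case with unit weights: with the notation of the general Dirac formula and all b_i = 1, setting λ = min{c, l}, the flat distance is ρ_F(c δ_{x_0}, Σ_{i=1}^n δ_{x_i}) = |c − l| + (n − l) + Σ_{i=1}^{⌊λ⌋} d_i + (λ − ⌊λ⌋) d_{⌊λ⌋+1}. -/
/-!
Testing against `f` gives `c f(x₀) - ∑ f(xᵢ)`. For the upper bound, transport mass `λ` from `x₀`
to the nearest points, filling `x₁, …, x_⌊λ⌋` completely and `x_{⌊λ⌋+1}` fractionally: the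
transported part costs at most `∑ wᵢ dᵢ` by the Lipschitz bound, and the untransported mass
`(c - λ) + (n - λ)` costs at most one per unit by the sup bound. The bound is attained by a
truncated cone `y ↦ max (-1) (a - |x₀ - y|)`, with top `a = 1` when `l ≤ c` and
`a = d_{⌊c⌋+1} - 1` when `c < l`.
-/

open MeasureTheory Finset

noncomputable def flatDist {d : ℕ} (μ ν : Measure (EuclideanSpace ℝ (Fin d))) : ℝ :=
  sSup { r : ℝ | ∃ f : EuclideanSpace ℝ (Fin d) → ℝ,
    (∀ x, |f x| ≤ 1) ∧ LipschitzWith 1 f ∧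
    r = ∫ x, f x ∂μ - ∫ x, f x ∂ν }

theorem flatDist_eq_of_le_of_exists {d : ℕ} {μ ν : Measure (EuclideanSpace ℝ (Fin d))} {V : ℝ}
    (hle : ∀ f : EuclideanSpace ℝ (Fin d) → ℝ, (∀ x, |f x| ≤ 1) → LipschitzWith 1 f →
      ∫ x, f x ∂μ - ∫ x, f x ∂ν ≤ V)
    (hex : ∃ f : EuclideanSpace ℝ (Fin d) → ℝ, (∀ x, |f x| ≤ 1) ∧ LipschitzWith 1 f ∧
      ∫ x, f x ∂μ - ∫ x, f x ∂ν = V) :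
    flatDist μ ν = V := by
  refine IsGreatest.csSup_eq ⟨?_, ?_⟩
  · obtain ⟨f, hb, hf, hV⟩ := hex
    exact ⟨f, hb, hf, hV.symm⟩
  · rintro r ⟨f, hb, hf, rfl⟩
    exact hle f hb hf

theorem integral_smul_dirac_sub_integral_sum_dirac {α ι : Type*} [MeasurableSpace α]
    [MeasurableSingletonClass α] [Fintype ι] {c : ℝ} (hc : 0 ≤ c) (x₀ : α) (x : ι → α)
    (f : α → ℝ) :
    ∫ y, f y ∂(ENNReal.ofReal c • Measure.dirac x₀) - ∫ y, f y ∂(∑ i, Measure.dirac (x i)) =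
      c * f x₀ - ∑ i, f (x i) := by
  rw [integral_smul_measure,
    integral_finsetSum_measure fun i _ => integrable_dirac enorm_lt_top]
  simp [integral_dirac, ENNReal.toReal_ofReal hc]

section Cone

variable {α : Type*} [PseudoMetricSpace α]

theorem abs_max_neg_one_sub_dist_le {a : ℝ} (ha : a ≤ 1) (x₀ y : α) :
    |max (-1) (a - dist x₀ y)| ≤ 1 :=
  abs_le.2 ⟨le_max_left _ _, max_le (by norm_num) (by linarith [dist_nonneg (x := x₀) (y := y)])⟩

theorem lipschitzWith_max_neg_one_sub_dist (a : ℝ) (x₀ : α) :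
    LipschitzWith 1 fun y => max (-1) (a - dist x₀ y) := by
  simpa using ((LipschitzWith.const a).sub (LipschitzWith.dist_right x₀)).const_max (-1)

end Cone

/-- Weights `1, …, 1, λ - ⌊λ⌋, 0, …, 0` summing to `λ`. -/
def rampWeight (lam : ℝ) (i : ℕ) : ℝ := min 1 (max 0 (lam - i))

theorem rampWeight_nonneg (lam : ℝ) (i : ℕ) : 0 ≤ rampWeight lam i :=
  le_min zero_le_one (le_max_left _ _)

theorem rampWeight_le_one (lam : ℝ) (i : ℕ) : rampWeight lam i ≤ 1 :=
  min_le_left _ _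

theorem rampWeight_of_lt_floor {lam : ℝ} {i : ℕ} (hi : i < ⌊lam⌋₊) : rampWeight lam i = 1 := by
  have : (i : ℝ) + 1 ≤ lam := by
    exact_mod_cast (Nat.le_floor_iff' (Nat.succ_ne_zero i)).1 hi
  exact min_eq_left (le_max_of_le_right (by linarith))

theorem rampWeight_floor {lam : ℝ} (hlam : 0 ≤ lam) :
    rampWeight lam ⌊lam⌋₊ = lam - ⌊lam⌋₊ := by
  have := Nat.floor_le hlam
  have := Nat.lt_floor_add_one lam
  rw [rampWeight, max_eq_right (by linarith), min_eq_right (by linarith)]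

theorem rampWeight_of_floor_lt {lam : ℝ} {i : ℕ} (hi : ⌊lam⌋₊ < i) : rampWeight lam i = 0 := by
  have : lam < i := by
    have := Nat.lt_floor_add_one lam
    have : (⌊lam⌋₊ : ℝ) + 1 ≤ i := by exact_mod_cast hi
    linarith
  rw [rampWeight, max_eq_left (by linarith), min_eq_right zero_le_one]

theorem sum_range_rampWeight_mul {lam : ℝ} (hlam : 0 ≤ lam) {n : ℕ} (hlamn : lam ≤ n)
    (g : ℕ → ℝ) :
    ∑ i ∈ range n, rampWeight lam i * g i =
      ∑ i ∈ range ⌊lam⌋₊, g i + (lam - ⌊lam⌋₊) * g ⌊lam⌋₊ := by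
  have hmn : ⌊lam⌋₊ ≤ n := Nat.floor_le_of_le hlamn
  have hhead : ∑ i ∈ range ⌊lam⌋₊, rampWeight lam i * g i = ∑ i ∈ range ⌊lam⌋₊, g i :=
    sum_congr rfl fun i hi => by rw [rampWeight_of_lt_floor (mem_range.1 hi), one_mul]
  rcases hmn.eq_or_lt with hm | hm
  · have hlam_eq : lam = ⌊lam⌋₊ := le_antisymm (hm ▸ hlamn) (Nat.floor_le hlam)
    rw [← hm, hhead, ← hlam_eq, sub_self, zero_mul, add_zero]
  · have htail : ∑ i ∈ Ico (⌊lam⌋₊ + 1) n, rampWeight lam i * g i = 0 :=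
      sum_eq_zero fun i hi => by
        rw [rampWeight_of_floor_lt (Nat.lt_of_succ_le (mem_Ico.1 hi).1), zero_mul]
    rw [← sum_range_add_sum_Ico _ hm, sum_range_succ, hhead, htail, add_zero,
      rampWeight_floor hlam]

theorem sum_range_rampWeight {lam : ℝ} (hlam : 0 ≤ lam) {n : ℕ} (hlamn : lam ≤ n) :
    ∑ i ∈ range n, rampWeight lam i = lam := by
  simpa using sum_range_rampWeight_mul hlam hlamn fun _ => 1

/-- Moving mass `wᵢ` from `x₀` to `xᵢ` costs `wᵢ dist x₀ xᵢ`; every other unit of mass costs `1`. -/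
theorem mul_apply_sub_sum_apply_le {α ι : Type*} [PseudoMetricSpace α] [Fintype ι]
    {f : α → ℝ} (hb : ∀ y, |f y| ≤ 1) (hf : LipschitzWith 1 f) {c : ℝ} (x₀ : α) (x : ι → α)
    {w : ι → ℝ} (hw0 : ∀ i, 0 ≤ w i) (hw1 : ∀ i, w i ≤ 1) (hwc : ∑ i, w i ≤ c) :
    c * f x₀ - ∑ i, f (x i) ≤
      (c - ∑ i, w i) + (Fintype.card ι - ∑ i, w i) + ∑ i, w i * dist x₀ (x i) := by
  have hterm : ∀ i, w i * f x₀ - f (x i) ≤ w i * dist x₀ (x i) + (1 - w i) := fun i => by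
    have hd : f x₀ - f (x i) ≤ dist x₀ (x i) :=
      (le_abs_self _).trans (by simpa [Real.dist_eq] using hf.dist_le_mul x₀ (x i))
    have hfx := abs_le.1 (hb (x i))
    nlinarith [mul_le_mul_of_nonneg_left hd (hw0 i), hw1 i]
  have hfx₀ := (abs_le.1 (hb x₀)).2
  calc c * f x₀ - ∑ i, f (x i)
      = (c - ∑ i, w i) * f x₀ + ∑ i, (w i * f x₀ - f (x i)) := by
        rw [sum_sub_distrib, ← sum_mul]; ring
    _ ≤ (c - ∑ i, w i) * 1 + ∑ i, (w i * dist x₀ (x i) + (1 - w i)) :=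
        add_le_add (mul_le_mul_of_nonneg_left hfx₀ (sub_nonneg.2 hwc))
          (sum_le_sum fun i _ => hterm i)
    _ = _ := by
        rw [sum_add_distrib, sum_sub_distrib, sum_const, card_univ, nsmul_one]; ring

theorem sum_range_max_neg_one {n k : ℕ} (hkn : k ≤ n) {g : ℕ → ℝ}
    (hlt : ∀ i < k, -1 ≤ g i) (hge : ∀ i, k ≤ i → i < n → g i ≤ -1) :
    ∑ i ∈ range n, max (-1) (g i) = ∑ i ∈ range k, g i - (n - k) := by
  rw [← sum_range_add_sum_Ico _ hkn,
    sum_congr rfl fun i hi => max_eq_right (hlt i (mem_range.1 hi)),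
    sum_congr rfl fun i hi => max_eq_left (hge i (mem_Ico.1 hi).1 (mem_Ico.1 hi).2),
    sum_const, Nat.card_Ico, nsmul_eq_mul, Nat.cast_sub hkn]
  ring

theorem exists_cone_level {n l : ℕ} {c : ℝ} (hc : 0 ≤ c) (hln : l ≤ n) {dd : ℕ → ℝ}
    (hdd : ∀ i < n, 0 ≤ dd i) (hmono : ∀ i j, i ≤ j → j < n → dd i ≤ dd j)
    (hl₁ : ∀ i < l, dd i ≤ 2) (hl₂ : ∀ i, l ≤ i → i < n → 2 < dd i) :
    ∃ a, -1 ≤ a ∧ a ≤ 1 ∧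
      c * a - ∑ i ∈ range n, max (-1) (a - dd i) =
        |c - l| + ((n : ℝ) - l) + ∑ i ∈ range ⌊min c (l : ℝ)⌋₊, dd i +
          (min c (l : ℝ) - ⌊min c (l : ℝ)⌋₊) * dd ⌊min c (l : ℝ)⌋₊ := by
  rcases le_or_gt (l : ℝ) c with hlc | hcl
  · refine ⟨1, by norm_num, le_rfl, ?_⟩
    rw [sum_range_max_neg_one hln (fun i hi => by linarith [hl₁ i hi])
      (fun i hi hin => by linarith [hl₂ i hi hin]), min_eq_right hlc, Nat.floor_natCast,
      abs_of_nonneg (sub_nonneg.2 hlc), sum_sub_distrib, sum_const, card_range]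
    ring
  · set m := ⌊c⌋₊
    have hml : m < l := by exact_mod_cast (Nat.floor_le hc).trans_lt hcl
    have hmn : m < n := hml.trans_le hln
    refine ⟨dd m - 1, by linarith [hdd m hmn], by linarith [hl₁ m hml], ?_⟩
    rw [sum_range_max_neg_one hmn.le (fun i hi => by linarith [hmono i m hi.le hmn])
      (fun i hi hin => by linarith [hmono m i hi hin]),
      min_eq_left hcl.le, abs_of_neg (sub_neg.2 hcl), sum_sub_distrib, sum_const, card_range]
    ring

theorem sub_min_add_sub_min (c l n : ℝ) : c - min c l + (n - min c l) = |c - l| + (n - l) := by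
  rcases le_total c l with h | h
  · rw [min_eq_left h, abs_of_nonpos (sub_nonpos.2 h)]; ring
  · rw [min_eq_right h, abs_of_nonneg (sub_nonneg.2 h)]

/-- Unit-weight special case, 0-based indexing (so the 1-based `d_{⌊λ⌋+1}` is `dd ⌊λ⌋₊`). -/
theorem flatDist_dirac_vs_unit_combination {d n : ℕ} (c : ℝ) (hc : 0 < c)
    (x₀ : EuclideanSpace ℝ (Fin d)) (x : Fin n → EuclideanSpace ℝ (Fin d))
    (dd : ℕ → ℝ)
    (hdd : ∀ i : Fin n, dd i = dist x₀ (x i))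
    (hmono : ∀ i j : Fin n, (i : ℕ) ≤ j → dd i ≤ dd j)
    (l : ℕ) (hln : l ≤ n)
    (hl₁ : ∀ i : Fin n, (i : ℕ) < l → dd i ≤ 2)
    (hl₂ : ∀ i : Fin n, l ≤ (i : ℕ) → 2 < dd i) :
    flatDist (ENNReal.ofReal c • Measure.dirac x₀) (∑ i, Measure.dirac (x i)) =
      |c - l| + ((n : ℝ) - l) +
        ∑ i ∈ Finset.range ⌊min c (l : ℝ)⌋₊, dd i +
        (min c (l : ℝ) - ⌊min c (l : ℝ)⌋₊) * dd ⌊min c (l : ℝ)⌋₊ := by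
  have hsum : ∀ g : ℕ → ℝ, ∑ i : Fin n, g i = ∑ i ∈ range n, g i :=
    fun g => Fin.sum_univ_eq_sum_range g n
  have hdist : ∀ g : ℕ → ℝ → ℝ, ∑ i : Fin n, g i (dist x₀ (x i)) = ∑ i ∈ range n, g i (dd i) :=
    fun g => by simp_rw [← hdd, hsum fun i => g i (dd i)]
  obtain ⟨a, ha₁, ha₂, ha⟩ := exists_cone_level hc.le hln (fun i hi => hdd ⟨i, hi⟩ ▸ dist_nonneg)
    (fun i j hij hj => hmono ⟨i, hij.trans_lt hj⟩ ⟨j, hj⟩ hij)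
    (fun i hi => hl₁ ⟨i, hi.trans_le hln⟩ hi) (fun i hi hin => hl₂ ⟨i, hin⟩ hi)
  refine flatDist_eq_of_le_of_exists (fun f hb hf => ?_)
    ⟨_, abs_max_neg_one_sub_dist_le ha₂ x₀, lipschitzWith_max_neg_one_sub_dist a x₀, ?_⟩
  all_goals rw [integral_smul_dirac_sub_integral_sum_dirac hc.le]
  · set lam := min c (l : ℝ)
    have hlam : 0 ≤ lam := le_min hc.le l.cast_nonneg
    have hlamn : lam ≤ n := (min_le_right _ _).trans (by exact_mod_cast hln)
    have hweights : ∑ i : Fin n, rampWeight lam i = lam := by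
      rw [hsum, sum_range_rampWeight hlam hlamn]
    have hcost : c - lam + (n - lam) = |c - l| + ((n : ℝ) - l) := sub_min_add_sub_min c l n
    have := mul_apply_sub_sum_apply_le (c := c) hb hf x₀ x (fun i => rampWeight_nonneg lam i)
      (fun i => rampWeight_le_one lam i) (hweights.trans_le (min_le_left _ _))
    rwa [hweights, Fintype.card_fin, hcost, hdist fun i t => rampWeight lam i * t,
      sum_range_rampWeight_mul hlam hlamn, ← add_assoc] at this
  · rw [dist_self, sub_zero, max_eq_right ha₁, hdist fun _ t => max (-1) (a - t), ha]
end

section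
/- Monotonicity of the reduced cost in the transported mass: with d_1 ≤ … ≤ d_n, l such that d_i ≤ 2 iff i ≤ l, weights b_i > 0, c > 0, define for α ∈ [0, min{c, Σ_{i=1}^l b_i}] the index I_α = max{ I : Σ_{i=1}^I b_i ≤ α } and F̃(α) = c + Σ_{i=1}^n b_i − 2α + Σ_{i=1}^{I_α} b_i d_i + (α − Σ_{i=1}^{I_α} b_i) d_{I_α+1}. Then F̃ is monotonically decreasing on [0, min{c, Σ_{i=1}^l b_i}]. -/
/-!
Let `w_i(α) = greedyFill b α i` be the part of the mass `α` that greedy filling sends to the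
`i`-th support point, i.e. `α` clamped to `[S_i, S_{i+1}]` minus `S_i`, where `S_i = Σ_{j<i} b_j`. On
`[0, Σ_{i<l} b_i]` the greedy cost is `Σ_{i<l} d_i w_i(α)` and the total mass is
`α = Σ_{i<l} w_i(α)`, so `F̃(α) = c + Σ b_i + Σ_{i<l} (d_i - 2) w_i(α)`. Every `w_i` is
nondecreasing in `α` and `d_i ≤ 2` for `i < l`, so every summand is nonincreasing.
-/

open Classical in
/-- `I_α`: the largest `I ≤ n` with `Σ_{i<I} b_i ≤ α` (0-based indexing). -/
noncomputable def Ialpha (bb : ℕ → ℝ) (n : ℕ) (α : ℝ) : ℕ :=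
  Nat.findGreatest (fun I => ∑ i ∈ Finset.range I, bb i ≤ α) n

/-- The reduced cost `F̃(α)` of greedily transporting mass `α`. -/
noncomputable def Ftilde (c : ℝ) (bb dd : ℕ → ℝ) (n : ℕ) (α : ℝ) : ℝ :=
  c + ∑ i ∈ Finset.range n, bb i - 2 * α +
    ∑ i ∈ Finset.range (Ialpha bb n α), bb i * dd i +
    (α - ∑ i ∈ Finset.range (Ialpha bb n α), bb i) * dd (Ialpha bb n α)

open Finset

section GreedyFill

variable {b : ℕ → ℝ} {α : ℝ} {i : ℕ}

theorem sum_range_le_sum_range_of_nonneg {m k : ℕ} (hb : ∀ i < m, 0 ≤ b i) (hkm : k ≤ m) :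
    ∑ j ∈ range k, b j ≤ ∑ j ∈ range m, b j :=
  sum_le_sum_of_subset_of_nonneg (range_subset_range.2 hkm)
    fun j hj _ => hb j (mem_range.1 hj)

variable (b) in
noncomputable def greedyFill (α : ℝ) (i : ℕ) : ℝ :=
  min α (∑ j ∈ range (i + 1), b j) - min α (∑ j ∈ range i, b j)

theorem monotone_greedyFill (hb : 0 ≤ b i) : Monotone (greedyFill b · i) := by
  intro x y hxy
  simp only [greedyFill, sum_range_succ]
  grind

theorem sum_greedyFill (hα : 0 ≤ α) (m : ℕ) :
    ∑ i ∈ range m, greedyFill b α i = min α (∑ j ∈ range m, b j) := by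
  simp only [greedyFill]
  rw [sum_range_sub (fun i => min α (∑ j ∈ range i, b j))]
  simp [hα]

theorem greedyFill_of_sum_range_succ_le (hb : 0 ≤ b i) (h : ∑ j ∈ range (i + 1), b j ≤ α) :
    greedyFill b α i = b i := by
  rw [sum_range_succ] at h
  rw [greedyFill, sum_range_succ, min_eq_right h, min_eq_right (by linarith)]
  ring

theorem greedyFill_of_le_sum_range (hb : 0 ≤ b i) (h : α ≤ ∑ j ∈ range i, b j) :
    greedyFill b α i = 0 := by
  rw [greedyFill, sum_range_succ, min_eq_left h, min_eq_left (by linarith)]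
  ring

theorem greedyFill_of_mem_Icc (h₁ : ∑ j ∈ range i, b j ≤ α) (h₂ : α ≤ ∑ j ∈ range (i + 1), b j) :
    greedyFill b α i = α - ∑ j ∈ range i, b j := by
  rw [greedyFill, min_eq_left h₂, min_eq_right h₁]

end GreedyFill

section CostRepresentation

variable {b d : ℕ → ℝ} {n m : ℕ} {α : ℝ}

theorem sum_mul_greedyFill_of_lt {I : ℕ} (hIm : I < m) (hb : ∀ i < m, 0 ≤ b i)
    (h₁ : ∑ j ∈ range I, b j ≤ α) (h₂ : α ≤ ∑ j ∈ range (I + 1), b j) :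
    ∑ i ∈ range m, d i * greedyFill b α i =
      ∑ i ∈ range I, b i * d i + (α - ∑ j ∈ range I, b j) * d I := by
  have below : ∀ i ∈ range I, d i * greedyFill b α i = b i * d i := fun i hi => by
    have hi := mem_range.1 hi
    rw [greedyFill_of_sum_range_succ_le (hb i (by omega))
      ((sum_range_le_sum_range_of_nonneg (fun j _ => hb j (by omega)) hi).trans h₁), mul_comm]
  have above : ∀ i ∈ Ico (I + 1) m, d i * greedyFill b α i = 0 := fun i hi => by
    have hi := mem_Ico.1 hi
    rw [greedyFill_of_le_sum_range (hb i hi.2)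
      (h₂.trans (sum_range_le_sum_range_of_nonneg (fun j _ => hb j (by omega)) hi.1)), mul_zero]
  rw [← sum_range_add_sum_Ico _ hIm, sum_range_succ, sum_congr rfl below, sum_eq_zero above,
    greedyFill_of_mem_Icc h₁ h₂]
  ring

theorem sum_mul_greedyFill_sum_range (hb : ∀ i < m, 0 ≤ b i) :
    ∑ i ∈ range m, d i * greedyFill b (∑ j ∈ range m, b j) i = ∑ i ∈ range m, b i * d i :=
  sum_congr rfl fun i hi => by
    have hi := mem_range.1 hi
    rw [greedyFill_of_sum_range_succ_le (hb i hi) (sum_range_le_sum_range_of_nonneg hb hi),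
      mul_comm]

theorem sum_range_Ialpha_le (hα : 0 ≤ α) : ∑ i ∈ range (Ialpha b n α), b i ≤ α :=
  Nat.findGreatest_spec (P := fun I => ∑ i ∈ range I, b i ≤ α) (Nat.zero_le n) (by simpa using hα)

theorem lt_sum_range_Ialpha_succ (h : Ialpha b n α < n) :
    α < ∑ i ∈ range (Ialpha b n α + 1), b i :=
  lt_of_not_ge <| Nat.findGreatest_is_greatest (P := fun I => ∑ i ∈ range I, b i ≤ α)
    (Nat.lt_succ_self _) h

theorem Ialpha_le {l : ℕ} (hb : ∀ i < n, 0 < b i) (hln : l ≤ n) (hα : 0 ≤ α)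
    (hαl : α ≤ ∑ i ∈ range l, b i) : Ialpha b n α ≤ l := by
  by_contra! hlI
  have hIn : Ialpha b n α ≤ n := Nat.findGreatest_le n
  have hsucc : ∑ i ∈ range (l + 1), b i ≤ ∑ i ∈ range (Ialpha b n α), b i :=
    sum_range_le_sum_range_of_nonneg (fun i hi => (hb i (by omega)).le) hlI
  have hbl := hb l (by omega)
  rw [sum_range_succ] at hsucc
  linarith [sum_range_Ialpha_le (b := b) (n := n) hα]

theorem sum_mul_greedyFill_eq_Ialpha {l : ℕ} (hb : ∀ i < n, 0 < b i) (hln : l ≤ n)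
    (hα : 0 ≤ α) (hαl : α ≤ ∑ i ∈ range l, b i) :
    ∑ i ∈ range l, d i * greedyFill b α i =
      ∑ i ∈ range (Ialpha b n α), b i * d i +
        (α - ∑ i ∈ range (Ialpha b n α), b i) * d (Ialpha b n α) := by
  have hb' : ∀ i < l, 0 ≤ b i := fun i hi => (hb i (by omega)).le
  have hI := sum_range_Ialpha_le (b := b) (n := n) hα
  rcases (Ialpha_le hb hln hα hαl).lt_or_eq with hlt | heq
  · exact sum_mul_greedyFill_of_lt hlt hb' hI (lt_sum_range_Ialpha_succ (by omega)).le
  · have hαeq : α = ∑ i ∈ range l, b i := le_antisymm hαl (heq ▸ hI)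
    rw [heq, hαeq, sum_mul_greedyFill_sum_range hb', sub_self, zero_mul, add_zero]

theorem Ftilde_eq_add_sum_greedyFill (c : ℝ) {l : ℕ} (hb : ∀ i < n, 0 < b i) (hln : l ≤ n)
    (hα : 0 ≤ α) (hαl : α ≤ ∑ i ∈ range l, b i) :
    Ftilde c b d n α = c + ∑ i ∈ range n, b i + ∑ i ∈ range l, (d i - 2) * greedyFill b α i := by
  have hmass : ∑ i ∈ range l, greedyFill b α i = α := by
    rw [sum_greedyFill hα, min_eq_left hαl]
  rw [Ftilde, add_assoc, ← sum_mul_greedyFill_eq_Ialpha hb hln hα hαl]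
  simp only [sub_mul, sum_sub_distrib, ← mul_sum, hmass]
  ring

end CostRepresentation

theorem Ftilde_antitone_general {n : ℕ} (c : ℝ) (dd bb : ℕ → ℝ)
    (hb : ∀ i : Fin n, 0 < bb i)
    (l : ℕ) (hln : l ≤ n)
    (hl : ∀ i : Fin n, dd i ≤ 2 ↔ (i : ℕ) < l) :
    ∀ α₁ α₂ : ℝ, 0 ≤ α₁ → α₁ ≤ α₂ → α₂ ≤ min c (∑ i ∈ Finset.range l, bb i) →
      Ftilde c bb dd n α₂ ≤ Ftilde c bb dd n α₁ := by
  intro α₁ α₂ h₁ h₁₂ h₂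
  have hb' : ∀ i < n, 0 < bb i := fun i hi => hb ⟨i, hi⟩
  have hα₂ : α₂ ≤ ∑ i ∈ range l, bb i := h₂.trans (min_le_right _ _)
  rw [Ftilde_eq_add_sum_greedyFill c hb' hln (h₁.trans h₁₂) hα₂,
    Ftilde_eq_add_sum_greedyFill c hb' hln h₁ (h₁₂.trans hα₂)]
  refine add_le_add le_rfl (sum_le_sum fun i hi => ?_)
  have hil : i < l := mem_range.1 hi
  have hdd : dd i ≤ 2 := (hl ⟨i, by omega⟩).2 hil
  exact mul_le_mul_of_nonpos_left (monotone_greedyFill (hb' i (by omega)).le h₁₂) (by linarith)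

/-- `F̃` is monotonically decreasing on `[0, min{c, Σ_{i<l} b_i}]`. -/
theorem Ftilde_antitone {n : ℕ} (c : ℝ) (hc : 0 < c) (dd bb : ℕ → ℝ)
    (hmono : ∀ i j : Fin n, (i : ℕ) ≤ j → dd i ≤ dd j)
    (hb : ∀ i : Fin n, 0 < bb i)
    (l : ℕ) (hln : l ≤ n)
    (hl : ∀ i : Fin n, dd i ≤ 2 ↔ (i : ℕ) < l) :
    ∀ α₁ α₂ : ℝ, 0 ≤ α₁ → α₁ ≤ α₂ → α₂ ≤ min c (∑ i ∈ Finset.range l, bb i) →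
      Ftilde c bb dd n α₂ ≤ Ftilde c bb dd n α₁ :=
  Ftilde_antitone_general c dd bb hb l hln hl
end
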